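/- arXiv:1807.04566 — 5 statements merged into one kernel-verified Lean document; each statement's English description precedes it below -/
import Mathlib

section
/- Let Z be a real Gaussian random variable with mean ξ and variance σ² > 0, and let f : ℝ → [0,∞) be a non-null, continuous, even function (integrable against the Gaussian weighted by |z|). Then E[f(Z)·Z] = 0 if and only if ξ = 0. -/
/-!
Pairing `z` with `-z` and using that `f` is even, `2 E[f(Z) Z] = ∫ f z * z * (φ z - φ (-z)) dz`,
where `φ` is the density of `N(ξ, v)`. Since `φ z / φ (-z) = exp (2 ξ z / v)`, the factor
`z * (φ z - φ (-z))` has the sign of `ξ` and vanishes only at `z = 0`. So for `ξ ≠ 0` the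
function `ξ * f z * z * (φ z - φ (-z))` is continuous, nonnegative and not identically zero,
hence `ξ E[f(Z) Z] > 0`. For `ξ = 0` the law is symmetric and `f z * z` is odd.
-/

open MeasureTheory ProbabilityTheory

section NegInvariant

variable {G E : Type*} [MeasurableSpace G] [AddGroup G] [MeasurableNeg G] [NormedAddCommGroup E]
  [NormedSpace ℝ E] {μ : Measure G} [μ.IsNegInvariant] {g : G → E}

theorem Function.Odd.integral_eq_zero (hg : g.Odd) : ∫ x, g x ∂μ = 0 := by
  have h : ∫ x, g x ∂μ = -∫ x, g x ∂μ := calc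
    ∫ x, g x ∂μ = ∫ x, g (-x) ∂μ := (integral_neg_eq_self g μ).symm
    _ = -∫ x, g x ∂μ := by simp only [hg.eq, integral_neg]
  have h2 : (2 : ℝ) • ∫ x, g x ∂μ = 0 := by
    rw [two_smul]
    nth_rewrite 2 [h]
    exact add_neg_cancel _
  exact (smul_eq_zero.1 h2).resolve_left two_ne_zero

theorem integral_add_comp_neg (hg : Integrable g μ) :
    ∫ x, (g x + g (-x)) ∂μ = 2 • ∫ x, g x ∂μ := by
  rw [integral_add hg hg.comp_neg, integral_neg_eq_self, two_nsmul]

end NegInvariant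

theorem Continuous.integral_pos_of_nonneg_of_ne_zero {X : Type*} [TopologicalSpace X]
    [MeasurableSpace X] {μ : Measure X} [μ.IsOpenPosMeasure] {g : X → ℝ} (hg : Continuous g)
    (hg_nonneg : 0 ≤ g) (hgi : Integrable g μ) (hne : g ≠ 0) : 0 < ∫ x, g x ∂μ := by
  refine (integral_nonneg hg_nonneg).lt_of_ne fun h => hne ?_
  exact (hg.ae_eq_iff_eq μ continuous_zero).1
    ((integral_eq_zero_iff_of_nonneg hg_nonneg hgi).1 h.symm)

theorem Continuous.exists_ne_apply_ne_zero {X Y : Type*} [TopologicalSpace X]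
    [TopologicalSpace Y] [T2Space Y] [Zero Y] (a : X) [(nhdsWithin a {a}ᶜ).NeBot] {f : X → Y}
    (hf : Continuous f) (hne : f ≠ 0) : ∃ x ≠ a, f x ≠ 0 := by
  by_contra! h
  exact hne (hf.ext_on (dense_compl_singleton a) continuous_const h)

namespace ProbabilityTheory

variable {μ : ℝ} {v : NNReal}

instance isNegInvariant_gaussianReal_zero : (gaussianReal 0 v).IsNegInvariant :=
  ⟨gaussianReal_map_neg.trans (by rw [neg_zero])⟩

@[fun_prop]
theorem continuous_gaussianPDFReal : Continuous (gaussianPDFReal μ v) := by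
  rw [gaussianPDFReal_def]
  fun_prop

theorem gaussianPDFReal_neg_lt_iff (hv : v ≠ 0) (x : ℝ) :
    gaussianPDFReal μ v (-x) < gaussianPDFReal μ v x ↔ 0 < μ * x := by
  rw [gaussianPDFReal, gaussianPDFReal, mul_lt_mul_iff_right₀ (by positivity), Real.exp_lt_exp,
    div_lt_div_iff_of_pos_right (by positivity)]
  constructor <;> intro h <;> nlinarith

theorem mul_gaussianPDFReal_sub_neg_pos (hv : v ≠ 0) {x : ℝ} (hx : μ * x ≠ 0) :
    0 < μ * x * (gaussianPDFReal μ v x - gaussianPDFReal μ v (-x)) := by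
  rcases hx.lt_or_gt with hneg | hpos
  · have h := (gaussianPDFReal_neg_lt_iff (μ := μ) hv (-x)).2 (by rwa [mul_neg, neg_pos])
    rw [neg_neg] at h
    exact mul_pos_of_neg_of_neg hneg (sub_neg.2 h)
  · exact mul_pos hpos (sub_pos.2 ((gaussianPDFReal_neg_lt_iff hv x).2 hpos))

theorem mul_gaussianPDFReal_sub_neg_nonneg (x : ℝ) :
    0 ≤ μ * x * (gaussianPDFReal μ v x - gaussianPDFReal μ v (-x)) := by
  rcases eq_or_ne v 0 with rfl | hv
  · simp
  rcases eq_or_ne (μ * x) 0 with hx | hx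
  · simp [hx]
  · exact (mul_gaussianPDFReal_sub_neg_pos hv hx).le

theorem integrable_gaussianReal_iff_integrable_smul {E : Type*} [NormedAddCommGroup E]
    [NormedSpace ℝ E] (hv : v ≠ 0) {f : ℝ → E} :
    Integrable f (gaussianReal μ v) ↔ Integrable (fun x => gaussianPDFReal μ v x • f x) := by
  rw [gaussianReal_of_var_ne_zero _ hv, integrable_withDensity_iff_integrable_smul'
    (measurable_gaussianPDF _ _) (ae_of_all _ fun _ => gaussianPDF_lt_top)]
  simp only [toReal_gaussianPDF]

theorem mul_integral_gaussianReal_even_mul_id_pos (hv : v ≠ 0) {f : ℝ → ℝ}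
    (hf_cont : Continuous f) (hf_nonneg : ∀ x, 0 ≤ f x) (hf_even : ∀ x, f (-x) = f x)
    (hf_ne : f ≠ 0) (hint : Integrable (fun z => f z * z) (gaussianReal μ v)) (hμ : μ ≠ 0) :
    0 < μ * ∫ z, f z * z ∂(gaussianReal μ v) := by
  set φ := gaussianPDFReal μ v
  set G : ℝ → ℝ := fun z => φ z * (f z * z)
  have hG_cont : Continuous G := continuous_gaussianPDFReal.mul (hf_cont.mul continuous_id)
  have hG : Integrable G := (integrable_gaussianReal_iff_integrable_smul hv).1 hint
  have hsym : ∀ z, μ * (G z + G (-z)) = f z * (μ * z * (φ z - φ (-z))) := by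
    intro z
    simp only [G, hf_even]
    ring
  suffices hsym_pos : 0 < ∫ z, μ * (G z + G (-z)) by
    have hE : ∫ z, f z * z ∂(gaussianReal μ v) = ∫ z, G z :=
      integral_gaussianReal_eq_integral_smul hv
    rw [integral_const_mul, integral_add_comp_neg hG, two_nsmul] at hsym_pos
    rw [hE]
    linarith
  obtain ⟨z, hz, hfz⟩ := hf_cont.exists_ne_apply_ne_zero 0 hf_ne
  have hpos : 0 < μ * (G z + G (-z)) := by
    rw [hsym]
    exact mul_pos ((hf_nonneg z).lt_of_ne' hfz)
      (mul_gaussianPDFReal_sub_neg_pos hv (mul_ne_zero hμ hz))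
  refine Continuous.integral_pos_of_nonneg_of_ne_zero (by fun_prop) (fun z => ?_)
    ((hG.add hG.comp_neg).const_mul μ) fun h => hpos.ne' (congrFun h z)
  rw [hsym]
  exact mul_nonneg (hf_nonneg z) (mul_gaussianPDFReal_sub_neg_nonneg z)

end ProbabilityTheory

/-- for `Z ~ N(ξ, σ²)` with `σ² ≠ 0` and a nonnegative, continuous, even,
not identically zero function `f` such that `f(Z)·Z` is integrable,
`E[f(Z)·Z] = 0` if and only if `ξ = 0`. -/
theorem gaussian_even_weight_mean_1d (ξ : ℝ) (v : NNReal) (hv : v ≠ 0)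
    (f : ℝ → ℝ) (hf_cont : Continuous f) (hf_nonneg : ∀ x, 0 ≤ f x)
    (hf_even : ∀ x, f (-x) = f x) (hf_ne : f ≠ 0)
    (hint : Integrable (fun z => f z * z) (gaussianReal ξ v)) :
    (∫ z, f z * z ∂(gaussianReal ξ v)) = 0 ↔ ξ = 0 := by
  constructor
  · intro hzero
    by_contra hξ
    simpa [hzero] using
      mul_integral_gaussianReal_even_mul_id_pos hv hf_cont hf_nonneg hf_even hf_ne hint hξ
  · rintro rfl
    exact Function.Odd.integral_eq_zero fun z => by simp [hf_even]
end

section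
/- Let Z be an m-dimensional Gaussian random vector with mean ξ ∈ ℝ^m and covariance matrix σ² I_m with σ ≠ 0. Let f : ℝ^m → [0,∞) be non-null, continuous, and even in each coordinate separately (i.e., f(x₁,…,x_i,…,x_m) = f(x₁,…,−x_i,…,x_m) for each i), with f(Z)·Z integrable. Then E[f(Z)·Z] = 0 if and only if ξ = 0. -/
/-!
Fix a coordinate `i` and split `ℝ^m = ℝ × ℝ^(m-1)`. Reflecting the `i`-th coordinate carries
`N(ξ, v I)` to the Gaussian with `ξ i` replaced by `-ξ i`, whose density with respect to
`N(ξ, v I)` is `w(x) = exp(-2 ξ_i x_i / v)`. As `f` is even in `x_i`, the reflection turns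
`I = E[f(Z) Z_i]` into `-E[w(Z) f(Z) Z_i]`. Hence `I = 0` forces
`E[ξ_i Z_i (1 - w(Z)) f(Z)] = 0`, whose integrand is nonnegative and vanishes only where `f` does
(`Z_i ≠ 0` almost surely), so `f = 0` a.e. and, by continuity, everywhere. Conversely, if
`ξ_i = 0` the reflection preserves the law of `Z`, so `I = -I`.
-/

open MeasureTheory ProbabilityTheory

open scoped ENNReal NNReal

lemma mul_one_sub_exp_neg_mul_pos {a s : ℝ} (ha : 0 < a) (hs : s ≠ 0) :
    0 < s * (1 - Real.exp (-(a * s))) := by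
  rcases hs.lt_or_gt with hs | hs
  · have : 1 < Real.exp (-(a * s)) := Real.one_lt_exp_iff.mpr (by nlinarith)
    exact mul_pos_of_neg_of_neg hs (by linarith)
  · have : Real.exp (-(a * s)) < 1 := Real.exp_lt_one_iff.mpr (by nlinarith)
    exact mul_pos hs (by linarith)

lemma mul_one_sub_exp_neg_mul_nonneg {a : ℝ} (ha : 0 < a) (s : ℝ) :
    0 ≤ s * (1 - Real.exp (-(a * s))) := by
  rcases eq_or_ne s 0 with rfl | hs
  · simp
  · exact (mul_one_sub_exp_neg_mul_pos ha hs).le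

namespace ProbabilityTheory

lemma isOpenPosMeasure_gaussianReal (c : ℝ) {v : ℝ≥0} (hv : v ≠ 0) :
    (gaussianReal c v).IsOpenPosMeasure :=
  (gaussianReal_absolutelyContinuous' c hv).isOpenPosMeasure

lemma gaussianPDFReal_neg (c : ℝ) {v : ℝ≥0} (hv : v ≠ 0) (t : ℝ) :
    gaussianPDFReal (-c) v t = gaussianPDFReal c v t * Real.exp (-(2 / v * (c * t))) := by
  simp only [gaussianPDFReal, mul_assoc, ← Real.exp_add]
  congr 2
  field_simp
  ring

lemma gaussianReal_neg_eq_withDensity (c : ℝ) {v : ℝ≥0} (hv : v ≠ 0) :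
    gaussianReal (-c) v =
      (gaussianReal c v).withDensity fun t => ENNReal.ofReal (Real.exp (-(2 / v * (c * t)))) := by
  rw [gaussianReal_of_var_ne_zero c hv, gaussianReal_of_var_ne_zero (-c) hv,
    ← withDensity_mul _ (measurable_gaussianPDF _ _) (by fun_prop)]
  congr 1
  funext t
  rw [Pi.mul_apply, gaussianPDF, gaussianPDF, gaussianPDFReal_neg c hv,
    ENNReal.ofReal_mul (gaussianPDFReal_nonneg _ _ _)]

end ProbabilityTheory

namespace MeasureTheory

variable {α E : Type*} [MeasurableSpace α] [InvolutiveNeg α] [MeasurableNeg α] [MeasurableSpace E]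
  (ν : Measure α) (ρ : Measure E) [SFinite ν] [SFinite ρ]

lemma Measure.map_neg_prod_eq_map :
    (ν.map Neg.neg).prod ρ =
      (ν.prod ρ).map ((MeasurableEquiv.neg α).prodCongr (MeasurableEquiv.refl E)) := by
  conv_lhs => rw [← Measure.map_id (μ := ρ)]
  exact Measure.map_prod_map ν ρ measurable_neg measurable_id

variable {ν ρ} {φ : α × E → ℝ} (hφ : ∀ t y, φ (-t, y) = -φ (t, y))
include hφ

lemma integral_map_neg_prod_of_odd :
    ∫ p, φ p ∂(ν.map Neg.neg).prod ρ = -∫ p, φ p ∂ν.prod ρ := by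
  rw [Measure.map_neg_prod_eq_map, integral_map_equiv, ← integral_neg]
  exact integral_congr_ae (ae_of_all _ fun p => hφ p.1 p.2)

lemma Integrable.map_neg_prod_of_odd (hint : Integrable φ (ν.prod ρ)) :
    Integrable φ ((ν.map Neg.neg).prod ρ) := by
  rw [Measure.map_neg_prod_eq_map, integrable_map_equiv]
  exact hint.neg.congr (ae_of_all _ fun p => (hφ p.1 p.2).symm)

end MeasureTheory

section GaussianProd

variable {E : Type*} [MeasurableSpace E] {ρ : Measure E} [SFinite ρ] {c : ℝ} {v : ℝ≥0}
  {g : ℝ × E → ℝ}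

lemma integrable_and_integral_exp_mul_eq_neg_of_even (hv : v ≠ 0)
    (hg_even : ∀ t y, g (-t, y) = g (t, y))
    (hint : Integrable (fun p => g p * p.1) ((gaussianReal c v).prod ρ)) :
    Integrable (fun p => Real.exp (-(2 / v * (c * p.1))) * (g p * p.1))
        ((gaussianReal c v).prod ρ) ∧
      ∫ p, Real.exp (-(2 / v * (c * p.1))) * (g p * p.1) ∂(gaussianReal c v).prod ρ =
        -∫ p, g p * p.1 ∂(gaussianReal c v).prod ρ := by
  have hodd (t : ℝ) (y : E) : g (-t, y) * -t = -(g (t, y) * t) := by rw [hg_even]; ring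
  have hdens : Measurable fun p : ℝ × E => ENNReal.ofReal (Real.exp (-(2 / v * (c * p.1)))) := by
    fun_prop
  have hfin : ∀ᵐ p ∂(gaussianReal c v).prod ρ,
      ENNReal.ofReal (Real.exp (-(2 / v * (c * p.1)))) < ∞ :=
    ae_of_all _ fun _ => ENNReal.ofReal_lt_top
  have htilt : ((gaussianReal c v).map Neg.neg).prod ρ = ((gaussianReal c v).prod ρ).withDensity
      fun p => ENNReal.ofReal (Real.exp (-(2 / v * (c * p.1)))) := by
    rw [show (gaussianReal c v).map Neg.neg = _ from gaussianReal_map_neg,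
      gaussianReal_neg_eq_withDensity c hv, prod_withDensity_left (by fun_prop)]
  have hsmul : (fun p : ℝ × E => (ENNReal.ofReal (Real.exp (-(2 / v * (c * p.1))))).toReal •
      (g p * p.1)) = fun p => Real.exp (-(2 / v * (c * p.1))) * (g p * p.1) := by
    simp only [ENNReal.toReal_ofReal (Real.exp_pos _).le, smul_eq_mul]
  constructor
  · rw [← hsmul, ← integrable_withDensity_iff_integrable_smul' hdens hfin, ← htilt]
    exact hint.map_neg_prod_of_odd hodd
  · rw [← hsmul, ← integral_withDensity_eq_integral_toReal_smul hdens hfin, ← htilt]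
    exact integral_map_neg_prod_of_odd hodd

variable [TopologicalSpace E] [ρ.IsOpenPosMeasure]

theorem integral_mul_fst_gaussianReal_prod_eq_zero_iff (hv : v ≠ 0) (hg_cont : Continuous g)
    (hg_nonneg : ∀ p, 0 ≤ g p) (hg_even : ∀ t y, g (-t, y) = g (t, y)) (hg_ne : g ≠ 0)
    (hint : Integrable (fun p => g p * p.1) ((gaussianReal c v).prod ρ)) :
    ∫ p, g p * p.1 ∂(gaussianReal c v).prod ρ = 0 ↔ c = 0 := by
  refine ⟨fun hI => ?_, ?_⟩
  · by_contra hc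
    have := isOpenPosMeasure_gaussianReal c hv
    have := nullSingletonClass_gaussianReal (μ := c) hv
    obtain ⟨hint_tilt, hI_tilt⟩ := integrable_and_integral_exp_mul_eq_neg_of_even hv hg_even hint
    set μ := (gaussianReal c v).prod ρ
    set w : ℝ → ℝ := fun t => Real.exp (-(2 / v * (c * t)))
    have hv' : (0 : ℝ) < 2 / v := by positivity
    have h_ae : (fun p : ℝ × E => c * p.1 * (1 - w p.1) * g p) =ᵐ[μ] 0 := by
      refine (integral_eq_zero_iff_of_nonneg
        (fun p => mul_nonneg (mul_one_sub_exp_neg_mul_nonneg hv' _) (hg_nonneg p)) ?_).mp ?_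
      · exact ((hint.sub hint_tilt).const_mul c).congr
          (ae_of_all _ fun p => by simp only [Pi.sub_apply]; ring)
      · calc ∫ p, c * p.1 * (1 - w p.1) * g p ∂μ
            = ∫ p, c * (g p * p.1 - w p.1 * (g p * p.1)) ∂μ :=
              integral_congr_ae (ae_of_all _ fun p => by ring)
          _ = 0 := by rw [integral_const_mul, integral_sub hint hint_tilt, hI_tilt, hI]; simp
    have hg_ae : g =ᵐ[μ] 0 := by
      filter_upwards [h_ae, Measure.quasiMeasurePreserving_fst.ae
        (compl_mem_ae_iff.mpr (measure_singleton (0 : ℝ)))] with p hp hp1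
      exact (mul_eq_zero.mp hp).resolve_left
        (mul_one_sub_exp_neg_mul_pos hv' (mul_ne_zero hc hp1)).ne'
    exact hg_ne ((hg_cont.ae_eq_iff_eq μ continuous_const).mp hg_ae)
  · rintro rfl
    have hodd (t : ℝ) (y : E) : g (-t, y) * -t = -(g (t, y) * t) := by rw [hg_even]; ring
    have := integral_map_neg_prod_of_odd (ν := gaussianReal 0 v) (ρ := ρ)
      (φ := fun p => g p * p.1) hodd
    rw [show (gaussianReal 0 v).map Neg.neg = _ from gaussianReal_map_neg, neg_zero] at this
    linarith

end GaussianProd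

theorem integral_mul_eval_gaussianReal_pi_eq_zero_iff {n : ℕ} (ξ : Fin (n + 1) → ℝ) {v : ℝ≥0}
    (hv : v ≠ 0) {f : (Fin (n + 1) → ℝ) → ℝ} (hf_cont : Continuous f) (hf_nonneg : ∀ x, 0 ≤ f x)
    (hf_ne : f ≠ 0) (i : Fin (n + 1)) (hf_even : ∀ x, f (Function.update x i (-(x i))) = f x)
    (hint : Integrable (fun x => f x * x i) (Measure.pi fun j => gaussianReal (ξ j) v)) :
    ∫ x, f x * x i ∂(Measure.pi fun j => gaussianReal (ξ j) v) = 0 ↔ ξ i = 0 := by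
  have := fun j => isOpenPosMeasure_gaussianReal (ξ j) hv
  set e := MeasurableEquiv.piFinSuccAbove (fun _ => ℝ) i
  have he := (measurePreserving_piFinSuccAbove (fun j => gaussianReal (ξ j) v) i).symm
  have he_apply (p : ℝ × (Fin n → ℝ)) : e.symm p = i.insertNth p.1 p.2 := rfl
  set g : ℝ × (Fin n → ℝ) → ℝ := fun p => f (i.insertNth p.1 p.2)
  have hcomp : (fun x => f x * x i) ∘ e.symm = fun p => g p * p.1 := by
    funext p
    simp [he_apply, g]
  have hint' := (he.integrable_comp_emb e.symm.measurableEmbedding).mpr hint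
  rw [hcomp] at hint'
  have hg_cont : Continuous g := by fun_prop
  have hg_even (t : ℝ) (y : Fin n → ℝ) : g (-t, y) = g (t, y) := by
    simpa [g] using hf_even (i.insertNth t y)
  have hg_ne : g ≠ 0 := fun hg => hf_ne <| funext fun x =>
    (congrArg f (e.symm_apply_apply x)).symm.trans (congrFun hg (e x))
  have key := integral_mul_fst_gaussianReal_prod_eq_zero_iff hv hg_cont (fun p => hf_nonneg _)
    hg_even hg_ne hint'
  rw [← hcomp] at key
  rwa [← he.integral_comp' (fun x => f x * x i)]

/-- for `Z ~ N(ξ, σ² I_m)` (modeled as the product of the one-dimensional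
Gaussians `N(ξ_i, σ²)`) with `σ² ≠ 0`, and `f : ℝ^m → [0,∞)` continuous, not identically
zero, even in each coordinate separately, with `f(Z)·Z_i` integrable for each `i`,
`E[f(Z)·Z] = 0` (componentwise) if and only if `ξ = 0`. -/
theorem gaussian_even_weight_mean_multi (m : ℕ) (ξ : Fin m → ℝ) (v : NNReal) (hv : v ≠ 0)
    (f : (Fin m → ℝ) → ℝ) (hf_cont : Continuous f) (hf_nonneg : ∀ x, 0 ≤ f x)
    (hf_even : ∀ (i : Fin m) (x : Fin m → ℝ), f (Function.update x i (-(x i))) = f x)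
    (hf_ne : f ≠ 0)
    (hint : ∀ i : Fin m,
      Integrable (fun x => f x * x i) (Measure.pi fun i => gaussianReal (ξ i) v)) :
    (∀ i : Fin m,
        (∫ x, f x * x i ∂(Measure.pi fun i => gaussianReal (ξ i) v)) = 0) ↔ ξ = 0 := by
  rw [funext_iff]
  refine forall_congr' fun i => ?_
  obtain ⟨n, rfl⟩ := Nat.exists_eq_add_one_of_ne_zero i.pos.ne'
  exact integral_mul_eval_gaussianReal_pi_eq_zero_iff ξ hv hf_cont hf_nonneg hf_ne i (hf_even i)
    (hint i)
end

section
/- Let ξ ∈ ℝ^m with ξ ≠ 0, let Z ~ N(ξ, σ² I_m) with σ ≠ 0, and let w : [0,∞) → [0,1] be bounded, measurable, with E[w(‖Z‖²)] > 0 (e.g., w nonzero and continuous). Then the equation E[w(‖Z‖²) Z] / E[w(‖Z‖²)] = 0 fails; equivalently, E[w(‖Z‖²) Z] = 0 holds if and only if ξ = 0. -/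
open MeasureTheory ProbabilityTheory

open scoped NNReal

/-! Integrate out one coordinate `x i` first; the others enter only through an even weight
`g(t) = w(t² + ∑_{j ≠ i} x_j²)`. Symmetrizing under `t ↦ -t` gives
`c ∫ g(t) t dN(c,v) = ½ ∫ g(t) · c t (φ_c(t) - φ_c(-t)) dt`,
and `c t (φ_c(t) - φ_c(-t)) > 0` whenever `c t ≠ 0`, because `(t + c)² - (t - c)² = 4ct`.
Hence `ξ i · E[w(‖Z‖²) Z_i] ≥ 0`, with equality for `ξ i ≠ 0` only if `w(‖Z‖²) = 0` almost
surely. If `ξ i = 0`, the reflection `x i ↦ -x i` preserves the law of `Z` and makes the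
integrand odd. -/

namespace GaussianWeightedMean

variable {c : ℝ} {v : ℝ≥0}

lemma gaussianPDFReal_neg_lt (hv : v ≠ 0) {t : ℝ} (h : 0 < c * t) :
    gaussianPDFReal c v (-t) < gaussianPDFReal c v t := by
  have hv' : (0 : ℝ) < v := by positivity
  simp only [gaussianPDFReal_def]
  refine mul_lt_mul_of_pos_left (Real.exp_lt_exp.2 ?_) (by positivity)
  exact div_lt_div_of_pos_right (by nlinarith) (by positivity)

lemma mul_sub_gaussianPDFReal_neg_pos (hv : v ≠ 0) {t : ℝ} (h : c * t ≠ 0) :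
    0 < c * t * (gaussianPDFReal c v t - gaussianPDFReal c v (-t)) := by
  rcases h.lt_or_gt with h | h
  · have := gaussianPDFReal_neg_lt (c := c) hv (t := -t) (by linarith)
    rw [neg_neg] at this
    nlinarith
  · nlinarith [gaussianPDFReal_neg_lt hv h]

lemma mul_sub_gaussianPDFReal_neg_nonneg (hv : v ≠ 0) (t : ℝ) :
    0 ≤ c * t * (gaussianPDFReal c v t - gaussianPDFReal c v (-t)) := by
  rcases eq_or_ne (c * t) 0 with h | h
  · simp [h]
  · exact (mul_sub_gaussianPDFReal_neg_pos hv h).le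

variable {g : ℝ → ℝ}

lemma integrable_gaussianPDFReal_mul (hv : v ≠ 0) {f : ℝ → ℝ}
    (hf : Integrable f (gaussianReal c v)) :
    Integrable (fun t => gaussianPDFReal c v t * f t) := by
  rw [gaussianReal_of_var_ne_zero _ hv, integrable_withDensity_iff_integrable_smul'
    (measurable_gaussianPDF c v) (ae_of_all _ fun _ => gaussianPDF_lt_top)] at hf
  simpa [toReal_gaussianPDF] using hf

lemma integrable_mul_sub_gaussianPDFReal_neg (hv : v ≠ 0) (hg_even : ∀ t, g (-t) = g t)
    (hint : Integrable (fun t => g t * t) (gaussianReal c v)) :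
    Integrable fun t =>
      g t * (c * t * (gaussianPDFReal c v t - gaussianPDFReal c v (-t))) / 2 := by
  have h := integrable_gaussianPDFReal_mul hv hint
  refine ((h.add h.comp_neg).const_mul (c / 2)).congr (ae_of_all _ fun t => ?_)
  simp only [Pi.add_apply, hg_even]
  ring

lemma mul_integral_mul_id_gaussianReal (hv : v ≠ 0) (hg_even : ∀ t, g (-t) = g t)
    (hint : Integrable (fun t => g t * t) (gaussianReal c v)) :
    c * ∫ t, g t * t ∂gaussianReal c v =
      ∫ t, g t * (c * t * (gaussianPDFReal c v t - gaussianPDFReal c v (-t))) / 2 := by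
  have h := integrable_gaussianPDFReal_mul hv hint
  have hrefl := integral_neg_eq_self (fun t => gaussianPDFReal c v t * (g t * t)) volume
  rw [integral_gaussianReal_eq_integral_smul hv]
  calc c * ∫ t, gaussianPDFReal c v t • (g t * t)
      = c / 2 * ((∫ t, gaussianPDFReal c v t * (g t * t)) +
          ∫ t, gaussianPDFReal c v (-t) * (g (-t) * -t)) := by
        rw [hrefl]; simp only [smul_eq_mul]; ring
    _ = _ := by
        rw [← integral_add h h.comp_neg, ← integral_const_mul]
        congr 1 with t
        rw [hg_even]
        ring

lemma mul_integral_mul_id_gaussianReal_nonneg (hg_even : ∀ t, g (-t) = g t) (hg : 0 ≤ g) :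
    0 ≤ c * ∫ t, g t * t ∂gaussianReal c v := by
  rcases eq_or_ne v 0 with rfl | hv
  · simp only [gaussianReal_zero_var, integral_dirac]
    nlinarith [mul_nonneg (hg c) (mul_self_nonneg c)]
  by_cases hint : Integrable (fun t => g t * t) (gaussianReal c v)
  · rw [mul_integral_mul_id_gaussianReal hv hg_even hint]
    exact integral_nonneg fun t =>
      div_nonneg (mul_nonneg (hg t) (mul_sub_gaussianPDFReal_neg_nonneg hv t)) zero_le_two
  · simp [integral_undef hint]

lemma integral_gaussianReal_eq_zero_of_integral_mul_id_eq_zero (hv : v ≠ 0) (hc : c ≠ 0)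
    (hg_even : ∀ t, g (-t) = g t) (hg : 0 ≤ g)
    (hint : Integrable (fun t => g t * t) (gaussianReal c v))
    (h : ∫ t, g t * t ∂gaussianReal c v = 0) :
    ∫ t, g t ∂gaussianReal c v = 0 := by
  have hsymm : (fun t => g t * (c * t * (gaussianPDFReal c v t - gaussianPDFReal c v (-t))) / 2)
      =ᵐ[volume] 0 := by
    refine (integral_eq_zero_iff_of_nonneg (fun t => ?_)
      (integrable_mul_sub_gaussianPDFReal_neg hv hg_even hint)).1 ?_
    · exact div_nonneg (mul_nonneg (hg t) (mul_sub_gaussianPDFReal_neg_nonneg hv t)) zero_le_two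
    · rw [← mul_integral_mul_id_gaussianReal hv hg_even hint, h, mul_zero]
  have hg0 : g =ᵐ[volume] 0 := by
    filter_upwards [hsymm, volume.ae_ne 0] with t ht ht0
    have := mul_sub_gaussianPDFReal_neg_pos hv (mul_ne_zero hc ht0)
    simpa [this.ne'] using ht
  rw [integral_congr_ae ((gaussianReal_absolutelyContinuous c hv).ae_le hg0)]
  simp


section Prod

variable {β : Type*} [MeasurableSpace β] {ν : Measure β} {g : ℝ × β → ℝ}

lemma integrable_mul_fst_gaussianReal_prod [IsFiniteMeasure ν] {C : ℝ}
    (hg_meas : AEStronglyMeasurable g ((gaussianReal c v).prod ν)) (hg_bdd : ∀ p, ‖g p‖ ≤ C) :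
    Integrable (fun p => g p * p.1) ((gaussianReal c v).prod ν) :=
  (((memLp_id_gaussianReal 1).integrable le_rfl).comp_fst ν).bdd_mul hg_meas
    (ae_of_all _ hg_bdd)

variable [SFinite ν]

lemma integral_mul_fst_gaussianReal_zero_prod (hg_even : ∀ t y, g (-t, y) = g (t, y)) :
    ∫ p, g p * p.1 ∂(gaussianReal 0 v).prod ν = 0 := by
  have hneg : MeasurePreserving (fun t : ℝ => -t) (gaussianReal 0 v) (gaussianReal 0 v) :=
    ⟨measurable_neg, by simpa using gaussianReal_map_neg (μ := 0) (v := v)⟩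
  have hrefl := (hneg.prod (.id ν)).integral_comp
    ((MeasurableEquiv.neg ℝ).prodCongr (.refl β)).measurableEmbedding (fun p => g p * p.1)
  have hodd (p : ℝ × β) :
      g (Prod.map (fun t => -t) id p) * (Prod.map (fun t => -t) id p).1 = -(g p * p.1) := by
    simp [Prod.map, hg_even]
  simp only [hodd, integral_neg] at hrefl
  linarith

lemma integral_mul_fst_gaussianReal_prod_ne_zero (hv : v ≠ 0) (hc : c ≠ 0)
    (hg_even : ∀ t y, g (-t, y) = g (t, y)) (hg : 0 ≤ g)
    (hint : Integrable (fun p => g p * p.1) ((gaussianReal c v).prod ν))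
    (hpos : 0 < ∫ p, g p ∂(gaussianReal c v).prod ν) :
    ∫ p, g p * p.1 ∂(gaussianReal c v).prod ν ≠ 0 := by
  intro h0
  have hF : c * ∫ y, ∫ t, g (t, y) * t ∂gaussianReal c v ∂ν = 0 := by
    rw [← integral_prod_symm _ hint, h0, mul_zero]
  rw [← integral_const_mul, integral_eq_zero_iff_of_nonneg
    (fun y => mul_integral_mul_id_gaussianReal_nonneg (fun t => hg_even t y) fun t => hg (t, y))
    (hint.integral_prod_right.const_mul c)] at hF
  have hG : (fun y => ∫ t, g (t, y) ∂gaussianReal c v) =ᵐ[ν] 0 := by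
    filter_upwards [hF, hint.prod_left_ae] with y hy hinty
    exact integral_gaussianReal_eq_zero_of_integral_mul_id_eq_zero hv hc
      (fun t => hg_even t y) (fun t => hg (t, y)) hinty
      ((mul_eq_zero.1 hy).resolve_left hc)
  rw [integral_prod_symm _ (.of_integral_ne_zero hpos.ne'), integral_congr_ae hG] at hpos
  simp at hpos

lemma integral_mul_fst_gaussianReal_prod_eq_zero_iff (hv : v ≠ 0)
    (hg_even : ∀ t y, g (-t, y) = g (t, y)) (hg : 0 ≤ g)
    (hint : Integrable (fun p => g p * p.1) ((gaussianReal c v).prod ν))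
    (hpos : 0 < ∫ p, g p ∂(gaussianReal c v).prod ν) :
    ∫ p, g p * p.1 ∂(gaussianReal c v).prod ν = 0 ↔ c = 0 := by
  refine ⟨fun h => ?_, fun hc => hc ▸ integral_mul_fst_gaussianReal_zero_prod hg_even⟩
  by_contra hc
  exact integral_mul_fst_gaussianReal_prod_ne_zero hv hc hg_even hg hint hpos h

end Prod

lemma integral_pi_eq_integral_prod_piFinSuccAbove {n : ℕ} {E : Type*} [NormedAddCommGroup E]
    [NormedSpace ℝ E] {α : Type*} [MeasurableSpace α] (μ : Fin (n + 1) → Measure α)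
    [∀ i, SigmaFinite (μ i)] (i : Fin (n + 1)) (f : α × (Fin n → α) → E) :
    ∫ x, f (x i, fun j => x (i.succAbove j)) ∂Measure.pi μ =
      ∫ p, f p ∂(μ i).prod (Measure.pi fun j => μ (i.succAbove j)) :=
  (measurePreserving_piFinSuccAbove μ i).integral_comp' f

end GaussianWeightedMean

open GaussianWeightedMean

/-- for `Z ~ N(ξ, σ² I_m)` (product of one-dimensional Gaussians, `σ² ≠ 0`)
and `w : [0,∞) → [0,1]` measurable with `E[w(‖Z‖²)] > 0`, the vector equation
`E[w(‖Z‖²) Z] = 0` holds if and only if `ξ = 0`; in particular it fails whenever `ξ ≠ 0`. -/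
theorem gaussian_weighted_mean_zero_iff (m : ℕ) (ξ : Fin m → ℝ) (v : NNReal) (hv : v ≠ 0)
    (w : ℝ → ℝ) (hw_meas : Measurable w) (hw_nonneg : ∀ t, 0 ≤ w t) (hw_le : ∀ t, w t ≤ 1)
    (hw_pos : 0 < ∫ x, w (∑ k, x k ^ 2) ∂(Measure.pi fun i => gaussianReal (ξ i) v)) :
    (∀ i : Fin m,
        (∫ x, w (∑ k, x k ^ 2) * x i ∂(Measure.pi fun i => gaussianReal (ξ i) v)) = 0)
      ↔ ξ = 0 := by
  suffices key : ∀ i, (∫ x, w (∑ k, x k ^ 2) * x i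
      ∂(Measure.pi fun i => gaussianReal (ξ i) v)) = 0 ↔ ξ i = 0 by
    simpa [funext_iff] using forall_congr' key
  intro i
  obtain ⟨n, rfl⟩ : ∃ n, m = n + 1 := ⟨m - 1, by have := i.pos; omega⟩
  have hsplit (x : Fin (n + 1) → ℝ) :
      ∑ k, x k ^ 2 = x i ^ 2 + ∑ j, x (i.succAbove j) ^ 2 :=
    Fin.sum_univ_succAbove _ i
  simp only [hsplit] at hw_pos ⊢
  rw [integral_pi_eq_integral_prod_piFinSuccAbove _ i
    (fun p => w (p.1 ^ 2 + ∑ j, p.2 j ^ 2) * p.1)]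
  rw [integral_pi_eq_integral_prod_piFinSuccAbove _ i
    (fun p => w (p.1 ^ 2 + ∑ j, p.2 j ^ 2))] at hw_pos
  refine integral_mul_fst_gaussianReal_prod_eq_zero_iff hv (fun t y => by simp)
    (fun p => hw_nonneg _) (integrable_mul_fst_gaussianReal_prod (C := 1)
      (hw_meas.comp (by fun_prop)).aestronglyMeasurable
      fun p => by simpa [abs_of_nonneg (hw_nonneg _)] using hw_le _) hw_pos
end

section
/- The generalized Marcum Q-function Q_{m/2}(a, b) = P(X > b), where X is the norm of an m-dimensional Gaussian vector with mean of norm a and identity covariance, is nondecreasing in its first argument a for each fixed b ≥ 0. -/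
/-!
Split `ℝ^m = ℝ × ℝ^(m-1)` along the direction of the mean. By Fubini it suffices that, for every
threshold `c`, the one-dimensional probability `P(c < (a + X)²)`, `X ~ N(0, 1)`, is nondecreasing
in `a ≥ 0`; equivalently, that the mass of the window `[-t - a, t - a]` (`t = √c`) decreases as
the window slides away from the origin. Sliding it from `a` to `a'` trades the mass of
`[t - a', t - a]` for that of `[-t - a', -t - a]`, its translate by `-2t`; since `|x| ≤ |x - 2t|`
for `x ≤ t` and the Gaussian density is even and decreasing in `|x|`, the second is the smaller.
-/

open MeasureTheory ProbabilityTheory Real NNReal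

lemma intervalIntegral_window_anti {f : ℝ → ℝ} (hf : ∀ p q, IntervalIntegrable f volume p q)
    (hf_unimodal : ∀ x y, |x| ≤ |y| → f y ≤ f x) {t a a' : ℝ} (ht : 0 ≤ t) (ha : 0 ≤ a)
    (haa' : a ≤ a') :
    ∫ x in -t - a'..t - a', f x ≤ ∫ x in -t - a..t - a, f x := by
  have hsplit : ∫ x in -t - a'..t - a', f x = (∫ x in -t - a..t - a, f x)
      + (∫ s in a..a', f (-t - s)) - ∫ s in a..a', f (t - s) := by
    rw [intervalIntegral.integral_comp_sub_left, intervalIntegral.integral_comp_sub_left,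
      ← intervalIntegral.integral_add_adjacent_intervals (hf (-t - a') (-t - a)) (hf _ (t - a')),
      ← intervalIntegral.integral_add_adjacent_intervals (hf (-t - a) (t - a')) (hf _ (t - a))]
    ring
  have htranslate : ∫ s in a..a', f (-t - s) ≤ ∫ s in a..a', f (t - s) := by
    have hf_sub (c : ℝ) : IntervalIntegrable (fun s => f (c - s)) volume a a' := by
      simpa using (hf (c - a) (c - a')).comp_sub_left c
    refine intervalIntegral.integral_mono_on haa' (hf_sub _) (hf_sub _) fun s hs => ?_
    have hs : 0 ≤ s := ha.trans hs.1
    refine hf_unimodal _ _ ?_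
    rw [abs_of_nonpos (by linarith : -t - s ≤ 0)]
    exact abs_le.2 ⟨by linarith, by linarith⟩
  linarith

lemma gaussianPDFReal_le_of_abs_le (v : ℝ≥0) {x y : ℝ} (h : |x| ≤ |y|) :
    gaussianPDFReal 0 v y ≤ gaussianPDFReal 0 v x := by
  simp only [gaussianPDFReal, sub_zero]
  rw [← sq_abs x, ← sq_abs y]
  gcongr

lemma gaussianReal_Icc_window_anti {v : ℝ≥0} (hv : v ≠ 0) {t a a' : ℝ} (ht : 0 ≤ t)
    (ha : 0 ≤ a) (haa' : a ≤ a') :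
    gaussianReal 0 v (Set.Icc (-t - a') (t - a')) ≤
      gaussianReal 0 v (Set.Icc (-t - a) (t - a)) := by
  have hIcc (d : ℝ) : gaussianReal 0 v (Set.Icc (-t - d) (t - d)) =
      ENNReal.ofReal (∫ x in -t - d..t - d, gaussianPDFReal 0 v x) := by
    rw [gaussianReal_apply_eq_integral 0 hv, integral_Icc_eq_integral_Ioc,
      intervalIntegral.integral_of_le (by linarith)]
  rw [hIcc, hIcc]
  exact ENNReal.ofReal_le_ofReal <| intervalIntegral_window_anti
    (fun _ _ => (integrable_gaussianPDFReal 0 v).intervalIntegrable)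
    (fun _ _ => gaussianPDFReal_le_of_abs_le v) ht ha haa'

lemma gaussianReal_setOf_lt_add_sq_mono {v : ℝ≥0} (hv : v ≠ 0) (c : ℝ) {a a' : ℝ} (ha : 0 ≤ a)
    (haa' : a ≤ a') :
    gaussianReal 0 v {x | c < (a + x) ^ 2} ≤ gaussianReal 0 v {x | c < (a' + x) ^ 2} := by
  rcases lt_or_ge c 0 with hc | hc
  · have huniv (d : ℝ) : {x : ℝ | c < (d + x) ^ 2} = Set.univ :=
      Set.eq_univ_of_forall fun x => hc.trans_le (sq_nonneg _)
    rw [huniv, huniv]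
  · obtain ⟨t, ht, rfl⟩ : ∃ t, 0 ≤ t ∧ c = t ^ 2 := ⟨√c, sqrt_nonneg c, (sq_sqrt hc).symm⟩
    have hcompl (d : ℝ) : {x : ℝ | t ^ 2 < (d + x) ^ 2} = (Set.Icc (-t - d) (t - d))ᶜ := by
      ext x
      rw [Set.mem_ofPred_eq, sq_lt_sq, abs_of_nonneg ht, lt_abs, Set.mem_compl_iff, Set.mem_Icc,
        not_and_or, not_le, not_le]
      constructor <;> rintro (h | h) <;> [right; left; right; left] <;> linarith
    rw [hcompl, hcompl, measure_compl measurableSet_Icc (measure_ne_top _ _),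
      measure_compl measurableSet_Icc (measure_ne_top _ _)]
    exact tsub_le_tsub_left (gaussianReal_Icc_window_anti hv ht ha haa') _

lemma gaussianReal_prod_setOf_lt_add_sq_add_mono {β : Type*} [MeasurableSpace β] (ν : Measure β)
    [SFinite ν] {v : ℝ≥0} (hv : v ≠ 0) (c : ℝ) {g : β → ℝ} (hg : Measurable g) {a a' : ℝ}
    (ha : 0 ≤ a) (haa' : a ≤ a') :
    (gaussianReal 0 v).prod ν {p | c < (a + p.1) ^ 2 + g p.2} ≤
      (gaussianReal 0 v).prod ν {p | c < (a' + p.1) ^ 2 + g p.2} := by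
  have hmeas (d : ℝ) : MeasurableSet {p : ℝ × β | c < (d + p.1) ^ 2 + g p.2} :=
    measurableSet_lt measurable_const <|
      (measurable_fst.const_add d).pow_const 2 |>.add (hg.comp measurable_snd)
  rw [Measure.prod_apply_symm (hmeas a), Measure.prod_apply_symm (hmeas a')]
  refine lintegral_mono fun y => ?_
  simp only [Set.preimage_ofPred_eq, ← sub_lt_iff_lt_add]
  exact gaussianReal_setOf_lt_add_sq_mono hv _ ha haa'

/-- the generalized Marcum Q-function
`Q_{m/2}(a, b) = P(‖a e₁ + W‖ > b)`, `W ~ N(0, I_m)`, is nondecreasing in the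
noncentrality parameter `a ≥ 0` for each fixed `b ≥ 0`. -/
theorem marcum_mono_noncentrality (m : ℕ) (hm : 0 < m)
    (QM : ℝ → ℝ → ℝ)
    (hQM : ∀ a t : ℝ, QM a t =
      ((Measure.pi fun _ : Fin m => gaussianReal 0 1)
        {y : Fin m → ℝ |
          t < Real.sqrt (∑ k, ((Pi.single (⟨0, hm⟩ : Fin m) a : Fin m → ℝ) k + y k) ^ 2)}).toReal)
    (b : ℝ) (hb : 0 ≤ b)
    (a a' : ℝ) (ha : 0 ≤ a) (haa' : a ≤ a') :
    QM a b ≤ QM a' b := by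
  obtain ⟨n, rfl⟩ : ∃ n, m = n + 1 := ⟨m - 1, (Nat.succ_pred_eq_of_pos hm).symm⟩
  have hsplit (d : ℝ) : {y : Fin (n + 1) → ℝ |
        b < √(∑ k, ((Pi.single (⟨0, hm⟩ : Fin (n + 1)) d : Fin (n + 1) → ℝ) k + y k) ^ 2)} =
      MeasurableEquiv.piFinSuccAbove (fun _ => ℝ) 0 ⁻¹'
        {p | b ^ 2 < (d + p.1) ^ 2 + ∑ j, p.2 j ^ 2} := by
    ext y
    simp [Fin.sum_univ_succ, lt_sqrt hb, Fin.succ_ne_zero, Fin.tail]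
  have hpi := measurePreserving_piFinSuccAbove (fun _ : Fin (n + 1) => gaussianReal 0 1) 0
  rw [hQM, hQM, hsplit, hsplit, hpi.measure_preimage_equiv, hpi.measure_preimage_equiv]
  exact ENNReal.toReal_mono (measure_ne_top _ _) <|
    gaussianReal_prod_setOf_lt_add_sq_add_mono _ one_ne_zero _
      (Finset.measurable_sum _ fun j _ => (measurable_pi_apply j).pow_const 2) ha haa'
end

section
/- With the setup of the previous statement, if additionally Σ_{n=1}^N w(ν_C²(z_n − θ)) > 0, then θ is a critical point of J if and only if θ is a fixed point of the map h_C(φ) = (Σ_n w(ν_C²(z_n − φ)) z_n) / (Σ_n w(ν_C²(z_n − φ))). -/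
/-!
With weights `w n = ρ'(ν_C²(z n - θ))`, the chain rule gives
`J'(θ) v = -(∑ n, w n • (z n - θ)) ⬝ᵥ (C⁻¹ + C⁻¹ᵀ) *ᵥ v`. As `C⁻¹ + C⁻¹ᵀ` is positive definite,
hence nondegenerate, `J'(θ) = 0` iff `∑ n, w n • (z n - θ) = 0`, and when `∑ n, w n ≠ 0` this says
that `θ` is the `w`-weighted centre of mass of the `z n`, i.e. `h_C θ = θ`.
-/

open Matrix

lemma Finset.centerMass_eq_iff_sum_smul_sub_eq_zero {R E ι : Type*} [Field R] [AddCommGroup E]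
    [Module R E] {t : Finset ι} {w : ι → R} (hw : ∑ i ∈ t, w i ≠ 0) (z : ι → E) (θ : E) :
    t.centerMass w z = θ ↔ ∑ i ∈ t, w i • (z i - θ) = 0 := by
  simp only [smul_sub, Finset.sum_sub_distrib, ← Finset.sum_smul, sub_eq_zero]
  exact inv_smul_eq_iff₀ hw

namespace Matrix

variable {ι : Type*} [Fintype ι] [DecidableEq ι]

noncomputable def toBilinCLM (M : Matrix ι ι ℝ) : (ι → ℝ) →L[ℝ] (ι → ℝ) →L[ℝ] ℝ :=
  (toLinearMap₂' ℝ M).toContinuousBilinearMap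

@[simp]
lemma toBilinCLM_apply (M : Matrix ι ι ℝ) (x y : ι → ℝ) : M.toBilinCLM x y = x ⬝ᵥ M *ᵥ y :=
  toLinearMap₂'_apply' M x y

lemma toBilinCLM_eq_zero_iff {M : Matrix ι ι ℝ} (hM : M.det ≠ 0) {x : ι → ℝ} :
    M.toBilinCLM x = 0 ↔ x = 0 := by
  refine ⟨fun h ↦ (nondegenerate_of_det_ne_zero hM).eq_zero_of_ortho fun v ↦ ?_, ?_⟩
  · simpa using congrArg (· v) h
  · rintro rfl
    exact map_zero _

lemma hasFDerivAt_sub_dotProduct_mulVec_sub (M : Matrix ι ι ℝ) (a x : ι → ℝ) :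
    HasFDerivAt (fun y ↦ (a - y) ⬝ᵥ M *ᵥ (a - y)) (-(M + Mᵀ).toBilinCLM (a - x)) x := by
  have hsub := (hasFDerivAt_id (𝕜 := ℝ) x).const_sub a
  have hB := M.toBilinCLM.hasFDerivAt_of_bilinear hsub hsub
  simp only [toBilinCLM_apply, id] at hB
  refine hB.congr_fderiv ?_
  ext v
  have hflip : v ⬝ᵥ M *ᵥ (a - x) = (a - x) ⬝ᵥ Mᵀ *ᵥ v := by
    rw [dotProduct_mulVec _ Mᵀ, vecMul_transpose, dotProduct_comm]
  simp only [_root_.add_apply, ContinuousLinearMap.precompR_apply,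
    ContinuousLinearMap.precompL_apply, ContinuousLinearMap.compL_apply,
    _root_.neg_apply, ContinuousLinearMap.comp_apply, ContinuousLinearMap.id_apply,
    map_neg, toBilinCLM_apply, hflip, add_mulVec, dotProduct_add]
  ring

end Matrix

lemma hasFDerivAt_sum_comp_sub_dotProduct_mulVec_sub {ι κ : Type*} [Fintype ι] [DecidableEq ι]
    [Fintype κ] (M : Matrix ι ι ℝ) {ρ : ℝ → ℝ} (hρ : Differentiable ℝ ρ) (z : κ → ι → ℝ)
    (θ : ι → ℝ) :
    HasFDerivAt (fun φ ↦ ∑ n, ρ ((z n - φ) ⬝ᵥ M *ᵥ (z n - φ)))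
      (-(M + Mᵀ).toBilinCLM (∑ n, deriv ρ ((z n - θ) ⬝ᵥ M *ᵥ (z n - θ)) • (z n - θ))) θ := by
  have h := HasFDerivAt.fun_sum (u := Finset.univ) fun n _ ↦
    (hρ _).hasDerivAt.comp_hasFDerivAt θ (M.hasFDerivAt_sub_dotProduct_mulVec_sub (z n) θ)
  simpa only [Function.comp_def, map_sum, map_smul, smul_neg, Finset.sum_neg_distrib] using h

theorem critical_point_iff_fixed_point_general (m N : ℕ)
    (ρ : ℝ → ℝ) (hρ_diff : Differentiable ℝ ρ)
    (C : Matrix (Fin m) (Fin m) ℝ) (hC : C.PosDef)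
    (z : Fin N → (Fin m → ℝ)) (θ : Fin m → ℝ)
    (hpos : 0 < ∑ n, deriv ρ ((z n - θ) ⬝ᵥ C⁻¹ *ᵥ (z n - θ))) :
    fderiv ℝ (fun φ : Fin m → ℝ => ∑ n, ρ ((z n - φ) ⬝ᵥ C⁻¹ *ᵥ (z n - φ))) θ = 0 ↔
      (∑ n, deriv ρ ((z n - θ) ⬝ᵥ C⁻¹ *ᵥ (z n - θ)))⁻¹ •
          ∑ n, deriv ρ ((z n - θ) ⬝ᵥ C⁻¹ *ᵥ (z n - θ)) • z n = θ := by
  have hdet : (C⁻¹ + C⁻¹ᵀ).det ≠ 0 := (hC.inv.add hC.inv.transpose).det_pos.ne'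
  rw [(hasFDerivAt_sum_comp_sub_dotProduct_mulVec_sub C⁻¹ hρ_diff z θ).fderiv, neg_eq_zero,
    toBilinCLM_eq_zero_iff hdet]
  exact (Finset.centerMass_eq_iff_sum_smul_sub_eq_zero hpos.ne' z θ).symm

/-- with `ρ` increasing, convex, differentiable, `w = ρ'`, `C` positive
definite, `ν_C²(x) = xᵀ C⁻¹ x`, `J(θ) = Σ_n ρ(ν_C²(z_n − θ))` and the additional
positivity `Σ_n w(ν_C²(z_n − θ)) > 0`, the point `θ` is a critical point of `J` iff it is
a fixed point of the weighted-mean map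
`h_C(φ) = (Σ_n w(ν_C²(z_n − φ)) z_n) / (Σ_n w(ν_C²(z_n − φ)))`. -/
theorem critical_point_iff_fixed_point (m N : ℕ)
    (ρ : ℝ → ℝ) (hρ_mono : StrictMono ρ) (hρ_conv : ConvexOn ℝ Set.univ ρ)
    (hρ_diff : Differentiable ℝ ρ)
    (C : Matrix (Fin m) (Fin m) ℝ) (hC : C.PosDef)
    (z : Fin N → (Fin m → ℝ)) (θ : Fin m → ℝ)
    (hpos : 0 < ∑ n, deriv ρ ((z n - θ) ⬝ᵥ C⁻¹ *ᵥ (z n - θ))) :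
    fderiv ℝ (fun φ : Fin m → ℝ => ∑ n, ρ ((z n - φ) ⬝ᵥ C⁻¹ *ᵥ (z n - φ))) θ = 0 ↔
      (∑ n, deriv ρ ((z n - θ) ⬝ᵥ C⁻¹ *ᵥ (z n - θ)))⁻¹ •
          ∑ n, deriv ρ ((z n - θ) ⬝ᵥ C⁻¹ *ᵥ (z n - θ)) • z n = θ :=
  critical_point_iff_fixed_point_general m N ρ hρ_diff C hC z θ hpos
end
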